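/- Let ω ≥ 2 be an integer and define c_ω⁻ := max over integers 1 ≤ n ≤ ω-1 of n²(ω² - n²)/(ω²(4ω² - 3n²)) and c_ω⁺ := min over integers n > 2ω/√3 of n²(ω² - n²)/(ω²(4ω² - 3n²)). Then 0 < c_ω⁻ < 1/9 and c_ω⁺ > 1. -/

import Mathlib

/-- `g(x) = x²(1-x²)/(4-3x²)`; note `g(n/ω) = n²(ω²-n²)/(ω²(4ω²-3n²))`. -/
noncomputable def gfun (x : ℝ) : ℝ := x ^ 2 * (1 - x ^ 2) / (4 - 3 * x ^ 2)

/-- `c_ω⁻ = max_{1 ≤ n ≤ ω-1} n²(ω²-n²)/(ω²(4ω²-3n²))`. -/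
noncomputable def cMinus (ω : ℤ) : ℝ :=
  sSup {y : ℝ | ∃ n : ℤ, 1 ≤ n ∧ n ≤ ω - 1 ∧
    y = (n:ℝ)^2 * ((ω:ℝ)^2 - (n:ℝ)^2) / ((ω:ℝ)^2 * (4*(ω:ℝ)^2 - 3*(n:ℝ)^2))}

/-- `c_ω⁺ = min_{n > 2ω/√3} n²(ω²-n²)/(ω²(4ω²-3n²))`. -/
noncomputable def cPlus (ω : ℤ) : ℝ :=
  sInf {y : ℝ | ∃ n : ℤ, 2 * (ω:ℝ) / Real.sqrt 3 < (n:ℝ) ∧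
    y = (n:ℝ)^2 * ((ω:ℝ)^2 - (n:ℝ)^2) / ((ω:ℝ)^2 * (4*(ω:ℝ)^2 - 3*(n:ℝ)^2))}

lemma sqirr (m w : ℤ) (hw : w ≠ 0) (c : ℕ) (hc : ¬ IsSquare c) :
    ((m:ℝ))^2 ≠ (c:ℝ) * (w:ℝ)^2 := by
  intro h
  set q : ℚ := (m : ℚ) / (w : ℚ) with hq
  have hwR : ((w:ℚ):ℝ) ≠ 0 := by exact_mod_cast Int.cast_ne_zero.mpr hw
  have hq2 : ((q:ℝ))^2 = (c:ℝ) := by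
    push_cast [hq]
    field_simp
    linarith [h]
  have hsqrt : Real.sqrt (c:ℝ) = ((|q| : ℚ) : ℝ) := by
    rw [← hq2, Real.sqrt_sq_eq_abs, Rat.cast_abs]
  have hirr : Irrational (Real.sqrt (c:ℕ)) := irrational_sqrt_natCast_iff.mpr hc
  rw [hsqrt] at hirr
  exact Rat.not_irrational _ hirr

/-- two times a nonzero square isn't a square (real version). -/
lemma not_square_aux (c : ℕ) (hc3 : c ≤ 8) (hc : ∀ r ≤ 3, r * r ≠ c) : ¬ IsSquare c := by
  rintro ⟨r, hr⟩
  have hr3 : r ≤ 3 := by nlinarith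
  exact hc r hr3 hr.symm

lemma ne_two_sq (n ω : ℤ) (hω : ω ≠ 0) : (n:ℝ)^2 ≠ 2 * (ω:ℝ)^2 := by
  have := sqirr n ω hω 2 (not_square_aux 2 (by norm_num) (by decide))
  simpa using this

lemma ne_two_thirds_sq (n ω : ℤ) (hω : ω ≠ 0) : 3 * (n:ℝ)^2 ≠ 2 * (ω:ℝ)^2 := by
  intro h
  have h6 := sqirr (3*n) ω hω 6 (not_square_aux 6 (by norm_num) (by decide))
  apply h6
  push_cast
  nlinarith [h]

/-- value of each term, as a real number -/
noncomputable def eval (ω n : ℤ) : ℝ :=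
  (n:ℝ)^2 * ((ω:ℝ)^2 - (n:ℝ)^2) / ((ω:ℝ)^2 * (4*(ω:ℝ)^2 - 3*(n:ℝ)^2))

/-- each admissible term for cPlus exceeds 1 -/
lemma one_lt_eval (ω n : ℤ) (hω : 2 ≤ ω) (h : 4*ω^2 < 3*n^2) : 1 < eval ω n := by
  have hb : (2:ℝ) ≤ (ω:ℝ) := by exact_mod_cast hω
  have h' : 4*(ω:ℝ)^2 < 3*(n:ℝ)^2 := by exact_mod_cast h
  have hB : (ω:ℝ)^2 * (4*(ω:ℝ)^2 - 3*(n:ℝ)^2) < 0 :=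
    mul_neg_of_pos_of_neg (by positivity) (by linarith)
  have hne : (n:ℝ)^2 - 2*(ω:ℝ)^2 ≠ 0 := by
    intro hz; exact ne_two_sq n ω (by omega) (by linarith)
  have hsq : 0 < ((n:ℝ)^2 - 2*(ω:ℝ)^2)^2 :=
    lt_of_le_of_ne (sq_nonneg _) (Ne.symm (pow_ne_zero 2 hne))
  rw [eval, lt_div_iff_of_neg hB]
  nlinarith [hsq]

/-- far-out terms are at least 2 -/
lemma two_le_eval (ω n : ℤ) (hω : 2 ≤ ω) (h : 4*ω < n) : 2 ≤ eval ω n := by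
  have hb : (2:ℝ) ≤ (ω:ℝ) := by exact_mod_cast hω
  have h' : 4*(ω:ℝ) + 1 ≤ (n:ℝ) := by exact_mod_cast (by omega : 4*ω + 1 ≤ n)
  have ha2 : 16*(ω:ℝ)^2 < (n:ℝ)^2 := by nlinarith
  have hB : (ω:ℝ)^2 * (4*(ω:ℝ)^2 - 3*(n:ℝ)^2) < 0 :=
    mul_neg_of_pos_of_neg (by positivity) (by nlinarith)
  rw [eval, le_div_iff_of_neg hB]
  nlinarith [sq_nonneg ((n:ℝ)^2 - 7*(ω:ℝ)^2), sq_nonneg ((n:ℝ)*(ω:ℝ))]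

/-- For each integer `ω ≥ 2`, `0 < c_ω⁻ < 1/9` and `c_ω⁺ > 1`. -/
theorem stmt11 (ω : ℤ) (hω : 2 ≤ ω) :
    0 < cMinus ω ∧ cMinus ω < 1/9 ∧ 1 < cPlus ω := by
  have hb : (2:ℝ) ≤ (ω:ℝ) := by exact_mod_cast hω
  have hω0 : ω ≠ 0 := by omega
  -- the cMinus set
  set S : Set ℝ := {y : ℝ | ∃ n : ℤ, 1 ≤ n ∧ n ≤ ω - 1 ∧ y = eval ω n} with hS
  have hSdef : cMinus ω = sSup S := rfl
  have hSeq : S = (fun n : ℤ => eval ω n) '' (Set.Icc 1 (ω - 1)) := by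
    ext y
    simp only [hS, Set.mem_setOf_eq, Set.mem_image, Set.mem_Icc]
    constructor
    · rintro ⟨n, h1, h2, rfl⟩; exact ⟨n, ⟨h1, h2⟩, rfl⟩
    · rintro ⟨n, ⟨h1, h2⟩, rfl⟩; exact ⟨n, h1, h2, rfl⟩
  have hSfin : S.Finite := by rw [hSeq]; exact (Set.finite_Icc _ _).image _
  have h1mem : eval ω 1 ∈ S := ⟨1, le_refl 1, by omega, rfl⟩
  have hSne : S.Nonempty := ⟨_, h1mem⟩
  have h1pos : 0 < eval ω 1 := by
    have heq : eval ω 1 = ((ω:ℝ)^2 - 1) / ((ω:ℝ)^2 * (4*(ω:ℝ)^2 - 3)) := by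
      rw [eval]; push_cast; ring
    rw [heq]
    have h1 : (0:ℝ) < (ω:ℝ)^2 - 1 := by nlinarith
    have h2 : (0:ℝ) < (ω:ℝ)^2 * (4*(ω:ℝ)^2 - 3) := by nlinarith
    exact div_pos h1 h2
  -- each element of S is < 1/9
  have hub : ∀ y ∈ S, y < 1/9 := by
    rintro y ⟨n, h1, h2, rfl⟩
    have ha1 : (1:ℝ) ≤ (n:ℝ) := by exact_mod_cast h1
    have ha2 : (n:ℝ) ≤ (ω:ℝ) - 1 := by
      have : (n:ℝ) ≤ ((ω - 1 : ℤ) : ℝ) := by exact_mod_cast h2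
      push_cast at this; linarith
    have hnn : (0:ℝ) < (n:ℝ) := by linarith
    have hlt : (n:ℝ)^2 < (ω:ℝ)^2 := by nlinarith
    have hD : (0:ℝ) < (ω:ℝ)^2 * (4*(ω:ℝ)^2 - 3*(n:ℝ)^2) := by nlinarith
    have hne : 2*(ω:ℝ)^2 - 3*(n:ℝ)^2 ≠ 0 := by
      intro hz; exact ne_two_thirds_sq n ω hω0 (by linarith)
    have hsq : 0 < (2*(ω:ℝ)^2 - 3*(n:ℝ)^2)^2 :=
      lt_of_le_of_ne (sq_nonneg _) (Ne.symm (pow_ne_zero 2 hne))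
    rw [eval, div_lt_iff₀ hD]
    nlinarith [hsq]
  have hcm : cMinus ω ∈ S := hSne.csSup_mem hSfin
  refine ⟨lt_of_lt_of_le h1pos (le_csSup hSfin.bddAbove h1mem), hub _ hcm, ?_⟩
  -- cPlus part
  have hs3 : (0:ℝ) < Real.sqrt 3 := Real.sqrt_pos.mpr (by norm_num)
  have hs3sq : Real.sqrt 3 ^ 2 = 3 := Real.sq_sqrt (by norm_num)
  -- conversion lemmas
  have hfwd : ∀ n : ℤ, 2 * (ω:ℝ) / Real.sqrt 3 < (n:ℝ) → 1 ≤ n ∧ 4*ω^2 < 3*n^2 := by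
    intro n hn
    have hpos : (0:ℝ) < 2 * (ω:ℝ) / Real.sqrt 3 := by positivity
    have hn0 : (0:ℝ) < (n:ℝ) := lt_trans hpos hn
    have hn1 : 1 ≤ n := by exact_mod_cast hn0
    have h2 : 2 * (ω:ℝ) < (n:ℝ) * Real.sqrt 3 := (div_lt_iff₀ hs3).mp hn
    have hA : (0:ℝ) < (n:ℝ) * Real.sqrt 3 - 2*(ω:ℝ) := by linarith
    have hB' : (0:ℝ) < (n:ℝ) * Real.sqrt 3 + 2*(ω:ℝ) := by
      have := mul_pos hn0 hs3; linarith
    have h4 : 4*(ω:ℝ)^2 < 3*(n:ℝ)^2 := by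
      nlinarith [mul_pos hA hB', hs3sq, sq_nonneg ((n:ℝ))]
    exact ⟨hn1, by exact_mod_cast h4⟩
  have hbwd : ∀ n : ℤ, 1 ≤ n → 4*ω^2 < 3*n^2 → 2 * (ω:ℝ) / Real.sqrt 3 < (n:ℝ) := by
    intro n h1 h2
    have ha : (1:ℝ) ≤ (n:ℝ) := by exact_mod_cast h1
    have h2' : 4*(ω:ℝ)^2 < 3*(n:ℝ)^2 := by exact_mod_cast h2
    rw [div_lt_iff₀ hs3]
    refine lt_of_pow_lt_pow_left₀ 2 (by positivity) ?_
    nlinarith [hs3sq, h2', sq_nonneg ((n:ℝ))]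
  set S' : Set ℝ := {y : ℝ | ∃ n : ℤ, 2 * (ω:ℝ) / Real.sqrt 3 < (n:ℝ) ∧ y = eval ω n}
    with hS'
  have hPdef : cPlus ω = sInf S' := rfl
  -- the finite filter set
  set F : Finset ℤ := (Finset.Icc 1 (4*ω)).filter (fun n => 4*ω^2 < 3*n^2) with hF
  have h4ωF : 4*ω ∈ F := by
    rw [hF, Finset.mem_filter, Finset.mem_Icc]
    refine ⟨⟨by omega, le_refl _⟩, by nlinarith⟩
  have hFne : F.Nonempty := ⟨_, h4ωF⟩
  have hTne : (F.image (fun n => eval ω n)).Nonempty := hFne.image _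
  set b₁ : ℝ := (F.image (fun n => eval ω n)).min' hTne with hb₁
  have h1ltb₁ : 1 < b₁ := by
    have := (F.image (fun n => eval ω n)).min'_mem hTne
    rw [Finset.mem_image] at this
    obtain ⟨n, hnF, hne⟩ := this
    rw [hF, Finset.mem_filter] at hnF
    rw [hb₁, ← hne]
    exact one_lt_eval ω n hω hnF.2
  set b : ℝ := min b₁ 2 with hbdef
  have hblb : ∀ y ∈ S', b ≤ y := by
    rintro y ⟨n, hn, rfl⟩
    obtain ⟨h1, h2⟩ := hfwd n hn
    by_cases hle : n ≤ 4*ω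
    · have hmem : eval ω n ∈ F.image (fun n => eval ω n) :=
        Finset.mem_image_of_mem _ (by
          rw [hF, Finset.mem_filter, Finset.mem_Icc]; exact ⟨⟨h1, hle⟩, h2⟩)
      exact le_trans (min_le_left _ _) (Finset.min'_le _ _ hmem)
    · exact le_trans (min_le_right _ _) (two_le_eval ω n hω (by omega))
  have hS'ne : S'.Nonempty := by
    refine ⟨eval ω (4*ω), ⟨4*ω, ?_, rfl⟩⟩
    have := hbwd (4*ω) (by omega) (by nlinarith)
    simpa using this
  have h1ltb : 1 < b := lt_min h1ltb₁ one_lt_two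
  exact lt_of_lt_of_le h1ltb (le_csInf hS'ne hblb)
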